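/- arXiv:1710.09558 — 2 statements merged into one kernel-verified Lean document; each statement's English description precedes it below -/
import Mathlib

section
/- Let H = −∂ₓ∂_y + u act on smooth functions of (x,y), with u(x,y) = −(1/2)φ'(y)·x + c₁·φ'(y) for a smooth function φ and constant c₁. Then the two operators L₁ = ∂ₓ² + φ(y) and L₂ = (x − 2c₁)⁻¹·∂ₓ each weakly commute with H (i.e., [Lᵢ, H] = Pᵢ·H for some differential operators Pᵢ), on the region x ≠ 2c₁. -/
/-- Partial derivative in the first variable of a curried function `ℝ → ℝ → ℝ`. -/
noncomputable def pdx (f : ℝ → ℝ → ℝ) : ℝ → ℝ → ℝ := fun x y => deriv (fun t => f t y) x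

/-- Partial derivative in the second variable. -/
noncomputable def pdy (f : ℝ → ℝ → ℝ) : ℝ → ℝ → ℝ := fun x y => deriv (fun t => f x t) y


section Aux
variable {f : ℝ → ℝ → ℝ}

private lemma ex2_pdx_eq (hf : Differentiable ℝ (fun p : ℝ × ℝ => f p.1 p.2)) (x y : ℝ) :
    pdx f x y = fderiv ℝ (fun p : ℝ × ℝ => f p.1 p.2) (x, y) (1, 0) := by
  have h1 : HasDerivAt (fun t : ℝ => ((t, y) : ℝ × ℝ)) ((1 : ℝ), (0 : ℝ)) x :=
    (hasDerivAt_id x).prodMk (hasDerivAt_const x y)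
  have h2 := (hf (x, y)).hasFDerivAt.comp_hasDerivAt x h1
  exact h2.deriv

private lemma ex2_pdy_eq (hf : Differentiable ℝ (fun p : ℝ × ℝ => f p.1 p.2)) (x y : ℝ) :
    pdy f x y = fderiv ℝ (fun p : ℝ × ℝ => f p.1 p.2) (x, y) (0, 1) := by
  have h1 : HasDerivAt (fun t : ℝ => ((x, t) : ℝ × ℝ)) ((0 : ℝ), (1 : ℝ)) y :=
    (hasDerivAt_const y x).prodMk (hasDerivAt_id y)
  have h2 := (hf (x, y)).hasFDerivAt.comp_hasDerivAt y h1
  exact h2.deriv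

private lemma ex2_hdx (hf : Differentiable ℝ (fun p : ℝ × ℝ => f p.1 p.2)) (x y : ℝ) :
    HasDerivAt (fun t => f t y) (pdx f x y) x := by
  rw [ex2_pdx_eq hf]
  have h1 : HasDerivAt (fun t : ℝ => ((t, y) : ℝ × ℝ)) ((1 : ℝ), (0 : ℝ)) x :=
    (hasDerivAt_id x).prodMk (hasDerivAt_const x y)
  exact (hf (x, y)).hasFDerivAt.comp_hasDerivAt x h1

private lemma ex2_hdy (hf : Differentiable ℝ (fun p : ℝ × ℝ => f p.1 p.2)) (x y : ℝ) :
    HasDerivAt (fun t => f x t) (pdy f x y) y := by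
  rw [ex2_pdy_eq hf]
  have h1 : HasDerivAt (fun t : ℝ => ((x, t) : ℝ × ℝ)) ((0 : ℝ), (1 : ℝ)) y :=
    (hasDerivAt_const y x).prodMk (hasDerivAt_id y)
  exact (hf (x, y)).hasFDerivAt.comp_hasDerivAt y h1

private lemma ex2_cx (hf : ContDiff ℝ (⊤ : ℕ∞) (fun p : ℝ × ℝ => f p.1 p.2)) :
    ContDiff ℝ (⊤ : ℕ∞) (fun p : ℝ × ℝ => pdx f p.1 p.2) := by
  have h : (fun p : ℝ × ℝ => pdx f p.1 p.2)
      = fun p : ℝ × ℝ => fderiv ℝ (fun p : ℝ × ℝ => f p.1 p.2) p (1, 0) := by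
    funext p
    rw [ex2_pdx_eq (hf.differentiable (by simp)) p.1 p.2]
  rw [h]
  exact (hf.fderiv_right (by simp)).clm_apply contDiff_const

private lemma ex2_cy (hf : ContDiff ℝ (⊤ : ℕ∞) (fun p : ℝ × ℝ => f p.1 p.2)) :
    ContDiff ℝ (⊤ : ℕ∞) (fun p : ℝ × ℝ => pdy f p.1 p.2) := by
  have h : (fun p : ℝ × ℝ => pdy f p.1 p.2)
      = fun p : ℝ × ℝ => fderiv ℝ (fun p : ℝ × ℝ => f p.1 p.2) p (0, 1) := by
    funext p
    rw [ex2_pdy_eq (hf.differentiable (by simp)) p.1 p.2]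
  rw [h]
  exact (hf.fderiv_right (by simp)).clm_apply contDiff_const

private lemma ex2_comm (hf : ContDiff ℝ (⊤ : ℕ∞) (fun p : ℝ × ℝ => f p.1 p.2)) :
    pdy (pdx f) = pdx (pdy f) := by
  funext x y
  have hd : Differentiable ℝ (fun p : ℝ × ℝ => f p.1 p.2) := hf.differentiable (by simp)
  have h2 : ContDiff ℝ (⊤ : ℕ∞) (fderiv ℝ (fun p : ℝ × ℝ => f p.1 p.2)) := hf.fderiv_right (by simp)
  have hdd : DifferentiableAt ℝ (fderiv ℝ (fun p : ℝ × ℝ => f p.1 p.2)) (x, y) :=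
    (h2.differentiable (by simp)) (x, y)
  have hxeq : (fun p : ℝ × ℝ => pdx f p.1 p.2)
      = fun p : ℝ × ℝ => fderiv ℝ (fun p : ℝ × ℝ => f p.1 p.2) p (1, 0) := by
    funext p; rw [ex2_pdx_eq hd p.1 p.2]
  have hyeq : (fun p : ℝ × ℝ => pdy f p.1 p.2)
      = fun p : ℝ × ℝ => fderiv ℝ (fun p : ℝ × ℝ => f p.1 p.2) p (0, 1) := by
    funext p; rw [ex2_pdy_eq hd p.1 p.2]
  have e1 : pdy (pdx f) x y
      = fderiv ℝ (fderiv ℝ (fun p : ℝ × ℝ => f p.1 p.2)) (x, y) (0, 1) (1, 0) := by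
    rw [ex2_pdy_eq ((ex2_cx hf).differentiable (by simp)) x y]
    rw [hxeq, fderiv_clm_apply hdd (differentiableAt_const _)]
    simp
  have e2 : pdx (pdy f) x y
      = fderiv ℝ (fderiv ℝ (fun p : ℝ × ℝ => f p.1 p.2)) (x, y) (1, 0) (0, 1) := by
    rw [ex2_pdx_eq ((ex2_cy hf).differentiable (by simp)) x y]
    rw [hyeq, fderiv_clm_apply hdd (differentiableAt_const _)]
    simp
  rw [e1, e2]
  exact second_derivative_symmetric (fun p => (hd p).hasFDerivAt) hdd.hasFDerivAt _ _

private lemma ex2_cderiv {g : ℝ → ℝ} (hg : ContDiff ℝ (⊤ : ℕ∞) g) : ContDiff ℝ (⊤ : ℕ∞) (deriv g) := by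
  have h : deriv g = fun y => fderiv ℝ g y 1 := by
    funext y; rw [fderiv_apply_one_eq_deriv]
  rw [h]
  exact (hg.fderiv_right (by simp)).clm_apply contDiff_const

end Aux

/-- Example 2: with `u = −(1/2)φ'(y)x + c₁φ'(y)`, both `L₁ = ∂ₓ² + φ(y)` and
`L₂ = (x − 2c₁)⁻¹∂ₓ` weakly commute with `H = −∂ₓ∂_y + u` on the region `x ≠ 2c₁`:
each commutator `[Lᵢ, H]` equals some differential operator `P` applied to `H f`. -/
theorem stmt_17 (φ : ℝ → ℝ) (hφ : ContDiff ℝ (⊤ : ℕ∞) φ) (c₁ : ℝ)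
    (u : ℝ → ℝ → ℝ)
    (hu : ∀ x y, u x y = -(1/2) * deriv φ y * x + c₁ * deriv φ y)
    (H L₁ L₂ : (ℝ → ℝ → ℝ) → (ℝ → ℝ → ℝ))
    (hH : ∀ f x y, H f x y = -(pdx (pdy f) x y) + u x y * f x y)
    (hL₁ : ∀ f x y, L₁ f x y = pdx (pdx f) x y + φ y * f x y)
    (hL₂ : ∀ f x y, L₂ f x y = (x - 2 * c₁)⁻¹ * pdx f x y) :
    (∃ (N : ℕ) (c : ℕ → ℕ → ℝ → ℝ → ℝ),
      ∀ f : ℝ → ℝ → ℝ, ContDiff ℝ (⊤ : ℕ∞) (fun p : ℝ × ℝ => f p.1 p.2) →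
        ∀ x y : ℝ, x ≠ 2 * c₁ →
          L₁ (H f) x y - H (L₁ f) x y
            = ∑ i ∈ Finset.range (N + 1), ∑ j ∈ Finset.range (N + 1),
                c i j x y * (pdx^[i] (pdy^[j] (H f))) x y) ∧
    (∃ (N : ℕ) (c : ℕ → ℕ → ℝ → ℝ → ℝ),
      ∀ f : ℝ → ℝ → ℝ, ContDiff ℝ (⊤ : ℕ∞) (fun p : ℝ × ℝ => f p.1 p.2) →
        ∀ x y : ℝ, x ≠ 2 * c₁ →
          L₂ (H f) x y - H (L₂ f) x y
            = ∑ i ∈ Finset.range (N + 1), ∑ j ∈ Finset.range (N + 1),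
                c i j x y * (pdx^[i] (pdy^[j] (H f))) x y) := by
  have hux : ∀ a b : ℝ, HasDerivAt (fun t => u t b) (-(1/2) * deriv φ b) a := by
    intro a b
    have e : (fun t => u t b) = fun t => -(1/2) * deriv φ b * t + c₁ * deriv φ b :=
      funext fun t => hu t b
    rw [e]
    simpa using ((hasDerivAt_id a).const_mul (-(1/2) * deriv φ b)).add_const (c₁ * deriv φ b)
  constructor
  · refine ⟨0, fun _ _ _ _ => 0, ?_⟩
    intro f hf x y _
    have hd : Differentiable ℝ (fun p : ℝ × ℝ => f p.1 p.2) := hf.differentiable (by simp)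
    have cy := ex2_cy hf
    have cx := ex2_cx hf
    have cxy := ex2_cx cy
    have cxxy := ex2_cx cxy
    have cxx := ex2_cx cx
    have cyxx := ex2_cy cxx
    have E1 : pdx (H f) = fun a b =>
        -(pdx (pdx (pdy f)) a b) + (-(1/2) * deriv φ b * f a b + u a b * pdx f a b) := by
      funext a b
      have e : (fun t => H f t b) = fun t => -(pdx (pdy f) t b) + u t b * f t b :=
        funext fun t => hH f t b
      have h := ((ex2_hdx (cxy.differentiable (by simp)) a b).neg).add
        ((hux a b).mul (ex2_hdx hd a b))
      show deriv (fun t => H f t b) a = _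
      rw [e]
      exact h.deriv
    have E2 : pdx (pdx (H f)) x y
        = -(pdx (pdx (pdx (pdy f))) x y) + (-(1/2) * deriv φ y * pdx f x y
            + (-(1/2) * deriv φ y * pdx f x y + u x y * pdx (pdx f) x y)) := by
      rw [E1]
      have h := ((ex2_hdx (cxxy.differentiable (by simp)) x y).neg).add
        (((ex2_hdx hd x y).const_mul (-(1/2) * deriv φ y)).add
          ((hux x y).mul (ex2_hdx (cx.differentiable (by simp)) x y)))
      exact h.deriv
    have E3 : pdy (L₁ f) = fun a b =>
        pdy (pdx (pdx f)) a b + (deriv φ b * f a b + φ b * pdy f a b) := by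
      funext a b
      have e : (fun t => L₁ f a t) = fun t => pdx (pdx f) a t + φ t * f a t :=
        funext fun t => hL₁ f a t
      have h := (ex2_hdy (cxx.differentiable (by simp)) a b).add
        (((hφ.differentiable (by simp) b).hasDerivAt).mul (ex2_hdy hd a b))
      show deriv (fun t => L₁ f a t) b = _
      rw [e]
      exact h.deriv
    have E4 : pdx (pdy (L₁ f)) x y
        = pdx (pdy (pdx (pdx f))) x y + (deriv φ y * pdx f x y + φ y * pdx (pdy f) x y) := by
      rw [E3]
      have h := (ex2_hdx (cyxx.differentiable (by simp)) x y).add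
        (((ex2_hdx hd x y).const_mul (deriv φ y)).add
          ((ex2_hdx (cy.differentiable (by simp)) x y).const_mul (φ y)))
      exact h.deriv
    have E5 : pdy (pdx (pdx f)) = pdx (pdx (pdy f)) := by
      rw [ex2_comm cx, ex2_comm hf]
    simp only [Finset.sum_range_one, Function.iterate_zero_apply, zero_mul]
    rw [hL₁ (H f) x y, hH (L₁ f) x y, E2, E4, E5, hH f x y, hL₁ f x y]
    ring
  · refine ⟨0, fun _ _ x _ => ((x - 2*c₁)⁻¹)^2, ?_⟩
    intro f hf x y hx
    have h0 : x - 2*c₁ ≠ 0 := sub_ne_zero.mpr hx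
    have hd : Differentiable ℝ (fun p : ℝ × ℝ => f p.1 p.2) := hf.differentiable (by simp)
    have cy := ex2_cy hf
    have cx := ex2_cx hf
    have cxy := ex2_cx cy
    have cyx := ex2_cy cx
    have E1 : pdx (H f) = fun a b =>
        -(pdx (pdx (pdy f)) a b) + (-(1/2) * deriv φ b * f a b + u a b * pdx f a b) := by
      funext a b
      have e : (fun t => H f t b) = fun t => -(pdx (pdy f) t b) + u t b * f t b :=
        funext fun t => hH f t b
      have h := ((ex2_hdx (cxy.differentiable (by simp)) a b).neg).add
        ((hux a b).mul (ex2_hdx hd a b))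
      show deriv (fun t => H f t b) a = _
      rw [e]
      exact h.deriv
    have E6 : pdy (L₂ f) = fun a b => (a - 2*c₁)⁻¹ * pdy (pdx f) a b := by
      funext a b
      have e : (fun t => L₂ f a t) = fun t => (a - 2*c₁)⁻¹ * pdx f a t :=
        funext fun t => hL₂ f a t
      have h := (ex2_hdy (cx.differentiable (by simp)) a b).const_mul ((a - 2*c₁)⁻¹)
      show deriv (fun t => L₂ f a t) b = _
      rw [e]
      exact h.deriv
    have hinv : HasDerivAt (fun t : ℝ => (t - 2*c₁)⁻¹) (-1 / (x - 2*c₁)^2) x := by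
      simpa [Pi.inv_def] using ((hasDerivAt_id x).sub_const (2*c₁)).inv h0
    have E7 : pdx (pdy (L₂ f)) x y
        = -1 / (x - 2*c₁)^2 * pdy (pdx f) x y
            + (x - 2*c₁)⁻¹ * pdx (pdy (pdx f)) x y := by
      rw [E6]
      have h := hinv.mul (ex2_hdx (cyx.differentiable (by simp)) x y)
      exact h.deriv
    have hsum : ∑ i ∈ Finset.range (0+1), ∑ j ∈ Finset.range (0+1),
        ((x - 2*c₁)⁻¹)^2 * (pdx^[i] (pdy^[j] (H f))) x y = ((x - 2*c₁)⁻¹)^2 * H f x y := by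
      simp
    rw [hsum, hL₂ (H f) x y, hH (L₂ f) x y, E7, ex2_comm hf, hH f x y, hL₂ f x y, E1]
    simp only [hu x y]
    field_simp
    ring
end

section
/- With H, L₁, L₂ as in Example 2 of the paper (L₁ = ∂ₓ² + φ(y), L₂ = (x−2c₁)⁻¹∂ₓ, u = −(1/2)φ'(y)x + c₁φ'(y), with φ' not identically zero), the commutator [L₁, L₂] is NOT of the form P·H for any differential operator P; i.e., two operators each weakly commuting with H need not weakly commute with each other. -/
lemma pdx_zero : pdx (fun _ _ => (0:ℝ)) = fun _ _ => 0 := by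
  funext x y; simp [pdx]

lemma pdy_zero : pdy (fun _ _ => (0:ℝ)) = fun _ _ => 0 := by
  funext x y; simp [pdy]

/-- Example 2, negative part: with `u = −(1/2)φ'(y)x + c₁φ'(y)` and `φ'` not identically
zero, the commutator `[L₁, L₂]` of `L₁ = ∂ₓ² + φ(y)` and `L₂ = (x − 2c₁)⁻¹∂ₓ` is NOT a left
multiple `P·H` of `H = −∂ₓ∂_y + u` by any differential operator `P` on the region `x ≠ 2c₁`:
two operators each weakly commuting with `H` need not weakly commute with each other. -/
theorem stmt_18 (φ : ℝ → ℝ) (hφ : ContDiff ℝ (⊤ : ℕ∞) φ) (c₁ : ℝ)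
    (hφ' : ∃ y, deriv φ y ≠ 0)
    (u : ℝ → ℝ → ℝ)
    (hu : ∀ x y, u x y = -(1/2) * deriv φ y * x + c₁ * deriv φ y)
    (H L₁ L₂ : (ℝ → ℝ → ℝ) → (ℝ → ℝ → ℝ))
    (hH : ∀ f x y, H f x y = -(pdx (pdy f) x y) + u x y * f x y)
    (hL₁ : ∀ f x y, L₁ f x y = pdx (pdx f) x y + φ y * f x y)
    (hL₂ : ∀ f x y, L₂ f x y = (x - 2 * c₁)⁻¹ * pdx f x y) :
    ¬ ∃ (N : ℕ) (c : ℕ → ℕ → ℝ → ℝ → ℝ),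
        ∀ f : ℝ → ℝ → ℝ, ContDiff ℝ (⊤ : ℕ∞) (fun p : ℝ × ℝ => f p.1 p.2) →
          ∀ x y : ℝ, x ≠ 2 * c₁ →
            L₁ (L₂ f) x y - L₂ (L₁ f) x y
              = ∑ i ∈ Finset.range (N + 1), ∑ j ∈ Finset.range (N + 1),
                  c i j x y * (pdx^[i] (pdy^[j] (H f))) x y := by
  rintro ⟨N, c, hc⟩
  -- the explicit kernel of H
  set E : ℝ → ℝ → ℝ := fun x y => Real.exp (c₁ * x - x ^ 2 / 4 + φ y) with hE
  have hφd : Differentiable ℝ φ := hφ.differentiable (by simp)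
  -- joint smoothness of E
  have hsmooth : ContDiff ℝ (⊤ : ℕ∞) (fun p : ℝ × ℝ => E p.1 p.2) := by
    apply Real.contDiff_exp.comp
    exact (((contDiff_const.mul contDiff_fst).sub
      ((contDiff_fst.pow 2).div_const 4)).add (hφ.comp contDiff_snd))
  -- x-derivative of E
  have hdE : ∀ x y, HasDerivAt (fun t => E t y) ((c₁ - x / 2) * E x y) x := by
    intro x y
    have h1 : HasDerivAt (fun t : ℝ => c₁ * t - t ^ 2 / 4 + φ y) (c₁ - x / 2) x := by
      have h :=
        (((hasDerivAt_id x).const_mul c₁).sub ((hasDerivAt_pow 2 x).div_const 4)).add_const (φ y)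
      refine h.congr_deriv ?_
      push_cast
      ring
    have := h1.exp
    convert this using 1
    simp [hE]
    ring
  have hpdxE : ∀ x y, pdx E x y = (c₁ - x / 2) * E x y := fun x y => (hdE x y).deriv
  -- second x-derivative
  have hdE2 : ∀ x y, HasDerivAt (fun t => (c₁ - t / 2) * E t y)
      ((-(1/2)) * E x y + (c₁ - x / 2) * ((c₁ - x / 2) * E x y)) x := by
    intro x y
    have h1 : HasDerivAt (fun t : ℝ => c₁ - t / 2) (-(1/2)) x := by
      have : HasDerivAt (fun t : ℝ => c₁ - t / 2) (0 - 1 / 2) x :=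
        (hasDerivAt_const x c₁).sub ((hasDerivAt_id x).div_const 2)
      convert this using 1; ring
    exact h1.mul (hdE x y)
  have hpdx2E : ∀ x y, pdx (pdx E) x y
      = ((-(1/2)) * E x y + (c₁ - x / 2) * ((c₁ - x / 2) * E x y)) := by
    intro x y
    have : (fun t => pdx E t y) = fun t => (c₁ - t / 2) * E t y := by
      funext t; exact hpdxE t y
    show deriv (fun t => pdx E t y) x = _
    rw [this]
    exact (hdE2 x y).deriv
  -- y-derivative of E
  have hpdyE : ∀ x y, pdy E x y = deriv φ y * E x y := by
    intro x y
    have h1 : HasDerivAt (fun t : ℝ => c₁ * x - x ^ 2 / 4 + φ t) (0 + deriv φ y) y :=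
      (hasDerivAt_const y _).add (hφd y).hasDerivAt
    have := h1.exp
    show deriv (fun t => E x t) y = _
    rw [this.deriv]
    simp [hE]; ring
  -- mixed derivative
  have hpdxpdyE : ∀ x y, pdx (pdy E) x y = deriv φ y * ((c₁ - x / 2) * E x y) := by
    intro x y
    have heq : (fun t => pdy E t y) = fun t => deriv φ y * E t y := by
      funext t; exact hpdyE t y
    show deriv (fun t => pdy E t y) x = _
    rw [heq]
    exact ((hdE x y).const_mul (deriv φ y)).deriv
  -- H annihilates E
  have hHE : H E = fun _ _ => 0 := by
    funext x y
    rw [hH, hpdxpdyE, hu]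
    ring
  -- hence all iterated derivatives of H E vanish
  have hiter : ∀ i j : ℕ, pdx^[i] (pdy^[j] (H E)) = fun _ _ => 0 := by
    intro i j
    rw [hHE, Function.iterate_fixed pdy_zero j, Function.iterate_fixed pdx_zero i]
  -- evaluate the claimed identity at x₀ = 2c₁ + 1, y₀ = 0
  set x₀ : ℝ := 2 * c₁ + 1 with hx₀
  have hx₀ne : x₀ ≠ 2 * c₁ := by rw [hx₀]; intro h; linarith
  have hkey := hc E hsmooth x₀ 0 hx₀ne
  -- the right-hand side is zero
  have hRHS : (∑ i ∈ Finset.range (N + 1), ∑ j ∈ Finset.range (N + 1),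
      c i j x₀ 0 * (pdx^[i] (pdy^[j] (H E))) x₀ 0) = 0 := by
    apply Finset.sum_eq_zero
    intro i _
    apply Finset.sum_eq_zero
    intro j _
    rw [hiter i j]
    simp
  rw [hRHS] at hkey
  -- L₂ E agrees with -(1/2) E near x₀
  have hL₂E : ∀ y, ∀ t : ℝ, t ≠ 2 * c₁ → L₂ E t y = -(1/2) * E t y := by
    intro y t ht
    rw [hL₂, hpdxE]
    have h0 : t - 2 * c₁ ≠ 0 := sub_ne_zero.mpr ht
    field_simp
    ring
  have hEv : ∀ y, (fun t => L₂ E t y) =ᶠ[nhds x₀] (fun t => -(1/2) * E t y) := by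
    intro y
    have hmem : {t : ℝ | t ≠ 2 * c₁} ∈ nhds x₀ :=
      isOpen_compl_singleton.mem_nhds hx₀ne
    filter_upwards [hmem] with t ht
    exact hL₂E y t ht
  -- compute pdx (pdx (L₂ E)) x₀ y
  have hpdx2L₂ : ∀ y, pdx (pdx (L₂ E)) x₀ y
      = -(1/2) * ((-(1/2)) * E x₀ y + (c₁ - x₀ / 2) * ((c₁ - x₀ / 2) * E x₀ y)) := by
    intro y
    have h1 : (fun t => pdx (L₂ E) t y) = deriv (fun s => L₂ E s y) := by
      funext t; rfl
    show deriv (fun t => pdx (L₂ E) t y) x₀ = _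
    rw [h1]
    have h2 : deriv (fun s => L₂ E s y) =ᶠ[nhds x₀]
        deriv (fun s => -(1/2) * E s y) := (hEv y).deriv
    rw [h2.deriv_eq]
    have h3 : deriv (fun s => -(1/2) * E s y)
        = fun s => -(1/2) * ((c₁ - s / 2) * E s y) := by
      funext s
      exact ((hdE s y).const_mul (-(1/2))).deriv
    rw [h3]
    exact ((hdE2 x₀ y).const_mul (-(1/2))).deriv
  -- compute pdx (L₁ E) x₀ y
  have hpdxL₁ : ∀ y, pdx (L₁ E) x₀ y
      = (-(c₁ - x₀ / 2)) * E x₀ y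
        + ((c₁ - x₀ / 2) * (c₁ - x₀ / 2) - 1/2 + φ y) * ((c₁ - x₀ / 2) * E x₀ y) := by
    intro y
    have h1 : (fun t => L₁ E t y)
        = fun t => ((c₁ - t / 2) * (c₁ - t / 2) - 1/2 + φ y) * E t y := by
      funext t
      rw [hL₁, hpdx2E]
      ring
    show deriv (fun t => L₁ E t y) x₀ = _
    rw [h1]
    have hg : HasDerivAt (fun t : ℝ => (c₁ - t / 2) * (c₁ - t / 2) - 1/2 + φ y)
        (-(c₁ - x₀ / 2)) x₀ := by
      have h1' : HasDerivAt (fun t : ℝ => c₁ - t / 2) (-(1/2)) x₀ := by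
        have : HasDerivAt (fun t : ℝ => c₁ - t / 2) (0 - 1 / 2) x₀ :=
          (hasDerivAt_const x₀ c₁).sub ((hasDerivAt_id x₀).div_const 2)
        convert this using 1; ring
      have := ((h1'.mul h1').sub_const (1/2 : ℝ)).add_const (φ y)
      refine this.congr_deriv ?_; ring
    exact (hg.mul (hdE x₀ y)).deriv
  -- evaluate the left-hand side
  have hinv : (x₀ - 2 * c₁)⁻¹ = 1 := by rw [hx₀]; norm_num
  rw [hL₁, hL₂ (L₁ E), hpdx2L₂ 0, hL₂E 0 x₀ hx₀ne, hpdxL₁ 0, hinv] at hkey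
  have hp : c₁ - x₀ / 2 = -(1/2) := by rw [hx₀]; ring
  rw [hp] at hkey
  have hpos : 0 < E x₀ 0 := Real.exp_pos _
  nlinarith [hkey, hpos]
end
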